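/- arXiv:2108.01325 — 2 statements merged into one kernel-verified Lean document; each statement's English description precedes it below -/
import Mathlib

section
/- Let G be an r-regular connected finite simple graph on n ≥ 2 vertices with signless Laplacian spectral decomposition q_0 > q_1 > … > q_d with projections f_0, …, f_d, and let u ∈ V be a vertex such that every eigenvalue q_i with f_i·e_u ≠ 0 is an integer. Then the signless Laplacian M of the Q-graph Q(G) admits no perfect state transfer between u (viewed as an index in the V-block of V ⊕ E) and any other index: there exist no w ∈ V ⊕ E with w ≠ u, no t ∈ ℝ, and no λ ∈ ℂ with |λ| = 1 such that exp(−i·t·M)·e_u = λ·e_w. -/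
/-!
Perfect state transfer from `a` at time `t` forces `t (θ - θ') ∈ πℤ` whenever `θ, θ'` are
eigenvalues with eigenvectors not vanishing at `a`. An eigenvector `x` of `R Rᵀ` with eigenvalue
`q ≠ 0` lifts to eigenvectors `((θ - (2r - 2 + q)) x, Rᵀ x)` of `M` for both roots `θ` of
`(θ - r) (θ - (2r - 2 + q)) = q`; when `q = 0` the lift `(x, 0)` has eigenvalue `r`.
For `r ≥ 2` the all-ones vector (`q = 2r`) gives two eigenvalues at `u` differing by the
irrational `√(9r² - 4r + 4)`. Since `e_u` is not an eigenvector of `R Rᵀ`, some integral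
`q ≠ 2r` also lies in the support of `u`, and its lifts yield a nonzero integer multiple of `t`
in `πℤ`; together with `t ≠ 0` this makes `√(9r² - 4r + 4)` rational.
For `r = 1` the graph is `K₂`, and the eigenvalues `3, 1, 0` of `M` give incompatible phases.
-/

open Matrix

/-- The vertex-edge incidence matrix of a simple graph. -/
noncomputable def incMat {V : Type*} [Fintype V] [DecidableEq V] (G : SimpleGraph V) :
    Matrix V G.edgeSet ℝ :=
  Matrix.of fun v e => if v ∈ (e : Sym2 V) then 1 else 0

/-- The signless Laplacian of the Q-graph of an r-regular graph, as a block matrix. -/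
noncomputable def QQ {V : Type*} [Fintype V] [DecidableEq V] (G : SimpleGraph V) (r : ℕ) :
    Matrix (V ⊕ G.edgeSet) (V ⊕ G.edgeSet) ℝ :=
  Matrix.fromBlocks ((r : ℝ) • 1) (incMat G) (incMat G)ᵀ
    ((2 * (r : ℝ) - 2) • 1 + (incMat G)ᵀ * incMat G)

open Complex

theorem Matrix.exp_mulVec_of_mulVec_eq_smul {n : Type*} [Fintype n] [DecidableEq n]
    {N : Matrix n n ℂ} {v : n → ℂ} {c : ℂ} (h : N *ᵥ v = c • v) :
    NormedSpace.exp N *ᵥ v = exp c • v := by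
  -- `exp` does not depend on the norm; any matrix norm makes the series available.
  let : SeminormedRing (Matrix n n ℂ) := Matrix.linftyOpSemiNormedRing
  let : NormedRing (Matrix n n ℂ) := Matrix.linftyOpNormedRing
  let : NormedAlgebra ℂ (Matrix n n ℂ) := Matrix.linftyOpNormedAlgebra
  have hpow (k : ℕ) : N ^ k *ᵥ v = c ^ k • v := by
    induction k with
    | zero => simp
    | succ k ih => rw [pow_succ', ← mulVec_mulVec, ih, mulVec_smul, h, smul_smul, pow_succ]
  have hN := (NormedSpace.exp_series_hasSum_exp' (𝕂 := ℂ) N).map (mulVec.addMonoidHomLeft v)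
    (Continuous.matrix_mulVec continuous_id continuous_const)
  have hc := (NormedSpace.exp_series_hasSum_exp' (𝕂 := ℂ) c).smul_const v
  rw [exp_eq_exp_ℂ]
  refine hN.unique (hc.congr_fun fun k => ?_)
  simp [mulVec.addMonoidHomLeft, smul_mulVec, hpow, smul_smul]

section QuantumWalk

variable {n : Type*} [Fintype n] [DecidableEq n]

def IsPerfectStateTransfer (N : Matrix n n ℝ) (a b : n) (t : ℝ) (l : ℂ) : Prop :=
  ‖l‖ = 1 ∧ NormedSpace.exp ((-(I * (t : ℂ))) • N.map ofReal) *ᵥ (Pi.single a 1 : n → ℂ)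
    = l • (Pi.single b 1 : n → ℂ)

/-- For symmetric `N` this is the eigenvalue support of `a` in the sense of spectral projections:
`θ` occurs iff its projection does not kill `Pi.single a 1`. -/
def InEigenvalueSupport (N : Matrix n n ℝ) (a : n) (θ : ℝ) : Prop :=
  ∃ v : n → ℝ, N *ᵥ v = θ • v ∧ v a ≠ 0

variable {N : Matrix n n ℝ} {a b : n} {t : ℝ} {l : ℂ}

namespace IsPerfectStateTransfer

theorem exp_mul_apply_eq (hN : N.IsSymm) (h : IsPerfectStateTransfer N a b t l)
    {v : n → ℝ} {θ : ℝ} (hv : N *ᵥ v = θ • v) :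
    exp (-(I * t * θ)) * v a = l * v b := by
  set U := NormedSpace.exp ((-(I * (t : ℂ))) • N.map ofReal)
  have hU : U.IsSymm := (hN.map ofReal).smul _ |>.exp
  have hvc : U *ᵥ (ofReal ∘ v) = exp (-(I * t * θ)) • (ofReal ∘ v) := by
    refine exp_mulVec_of_mulVec_eq_smul ?_
    have hmap : N.map ofReal *ᵥ (ofReal ∘ v) = ofReal ∘ (N *ᵥ v) :=
      funext fun i => (RingHom.map_mulVec ofRealHom N v i).symm
    rw [smul_mulVec, hmap, hv]
    ext i
    simp only [Function.comp_apply, Pi.smul_apply, smul_eq_mul, ofReal_mul]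
    ring
  have key := congrArg ((ofReal ∘ v) ⬝ᵥ ·) h.2
  rw [dotProduct_mulVec, ← mulVec_transpose, hU.eq, hvc] at key
  simpa [dotProduct_single, mul_comm] using key

theorem time_ne_zero (hab : a ≠ b) (h : IsPerfectStateTransfer N a b t l) : t ≠ 0 := by
  rintro rfl
  have := congrFun h.2 a
  simp [hab] at this

theorem abs_apply_eq (hN : N.IsSymm) (h : IsPerfectStateTransfer N a b t l)
    {v : n → ℝ} {θ : ℝ} (hv : N *ᵥ v = θ • v) : |v a| = |v b| := by
  have := congrArg norm (h.exp_mul_apply_eq hN hv)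
  simpa [norm_exp, h.1] using this

theorem mul_exp_sq_eq_one (hN : N.IsSymm) (h : IsPerfectStateTransfer N a b t l)
    {v : n → ℝ} {θ : ℝ} (hv : N *ᵥ v = θ • v) (ha : v a ≠ 0) :
    (l * exp (I * t * θ)) ^ 2 = 1 := by
  have hrel := h.exp_mul_apply_eq hN hv
  have habs := h.abs_apply_eq hN hv
  have hb : v b ≠ 0 := fun hb => ha (abs_eq_zero.1 (habs.trans (by simp [hb])))
  have hz : l * exp (I * t * θ) = ((v a / v b : ℝ) : ℂ) := by
    rw [exp_neg] at hrel
    rw [ofReal_div, eq_div_iff (ofReal_ne_zero.2 hb)]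
    linear_combination (-exp (I * t * θ)) * hrel + v a * mul_inv_cancel₀ (exp_ne_zero (I * t * θ))
  rw [hz, ← ofReal_pow, div_pow, ← sq_abs, habs, sq_abs, div_self (pow_ne_zero 2 hb), ofReal_one]

theorem exists_int_mul_pi (hN : N.IsSymm) (h : IsPerfectStateTransfer N a b t l)
    {θ₁ θ₂ : ℝ} (h₁ : InEigenvalueSupport N a θ₁) (h₂ : InEigenvalueSupport N a θ₂) :
    ∃ m : ℤ, t * (θ₁ - θ₂) = m * Real.pi := by
  obtain ⟨v₁, hv₁, ha₁⟩ := h₁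
  obtain ⟨v₂, hv₂, ha₂⟩ := h₂
  have hl : l ^ 2 ≠ 0 := pow_ne_zero 2 (norm_ne_zero_iff.1 (h.1 ▸ one_ne_zero))
  have hexp : exp (2 * (I * t * θ₁)) = exp (2 * (I * t * θ₂)) := by
    refine mul_left_cancel₀ hl ?_
    have h₁ := h.mul_exp_sq_eq_one hN hv₁ ha₁
    have h₂ := h.mul_exp_sq_eq_one hN hv₂ ha₂
    rw [mul_pow, ← exp_nat_mul] at h₁ h₂
    push_cast at h₁ h₂
    rw [h₁, h₂]
  obtain ⟨m, hm⟩ := exp_eq_exp_iff_exists_int.1 hexp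
  refine ⟨m, ofReal_injective ?_⟩
  push_cast
  linear_combination (-(I / 2)) * hm + (t * θ₁ - t * θ₂ - m * Real.pi) * I_sq

end IsPerfectStateTransfer

end QuantumWalk

section SpectralDecomposition

variable {n ι : Type*} [Fintype n] [DecidableEq n] [Fintype ι]
  {Q : Matrix n n ℝ} {q : ι → ℝ} {f : ι → Matrix n n ℝ}

theorem mulVec_mulVec_eq_smul_of_eq_sum_smul (hfi : ∀ i, IsIdempotentElem (f i))
    (hfo : ∀ i j, i ≠ j → f i * f j = 0) (hQ : Q = ∑ i, q i • f i) (i : ι) (x : n → ℝ) :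
    Q *ᵥ (f i *ᵥ x) = q i • (f i *ᵥ x) := by
  have hQf : Q * f i = q i • f i := by
    rw [hQ, Finset.sum_mul, Finset.sum_eq_single i (fun j _ hji => by
      rw [smul_mul_assoc, hfo j i hji, smul_zero]) (by simp), smul_mul_assoc, (hfi i).eq]
  rw [mulVec_mulVec, hQf, smul_mulVec]

theorem exists_mulVec_ne_zero_and_ne_of_mulVec_ne_smul (hfsum : ∑ i, f i = 1)
    (hQ : Q = ∑ i, q i • f i) {x : n → ℝ} {μ : ℝ} (h : Q *ᵥ x ≠ μ • x) :
    ∃ i, f i *ᵥ x ≠ 0 ∧ q i ≠ μ := by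
  contrapose! h
  have hterm (i : ι) : q i • (f i *ᵥ x) = μ • (f i *ᵥ x) := by
    by_cases hi : f i *ᵥ x = 0
    · simp [hi]
    · rw [h i hi]
  calc Q *ᵥ x = ∑ i, q i • (f i *ᵥ x) := by simp [hQ, sum_mulVec, smul_mulVec]
    _ = μ • ∑ i, f i *ᵥ x := by simp [hterm, Finset.smul_sum]
    _ = μ • x := by rw [← sum_mulVec, hfsum, one_mulVec]

theorem mulVec_single_apply_pos_of_isSymm_of_isIdempotentElem {P : Matrix n n ℝ}
    (hPs : P.IsSymm) (hPi : IsIdempotentElem P) {u : n} (h : P *ᵥ Pi.single u 1 ≠ 0) : 0 < (P *ᵥ Pi.single u 1) u := by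
  set y := P *ᵥ Pi.single u 1
  have hy : y ⬝ᵥ y = y u := by
    rw [dotProduct_mulVec, ← mulVec_transpose, hPs.eq, mulVec_mulVec, hPi.eq, dotProduct_single,
      mul_one]
  rw [← hy]
  simpa using (dotProduct_star_self_pos_iff (v := y)).2 h

end SpectralDecomposition

theorem irrational_sqrt_nine_mul_sq_sub {r : ℕ} (hr : 2 ≤ r) :
    Irrational √(9 * (r : ℝ) ^ 2 - 4 * r + 4) := by
  obtain ⟨k, rfl⟩ := Nat.exists_eq_add_of_le' hr
  have hcast : 9 * ((k + 2 : ℕ) : ℝ) ^ 2 - 4 * (k + 2 : ℕ) + 4 = (9 * k ^ 2 + 32 * k + 32 : ℕ) := by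
    push_cast; ring
  rw [hcast, irrational_sqrt_natCast_iff]
  rintro ⟨m, hm⟩
  refine Nat.not_exists_sq (m := 3 * k + 5) ?_ ?_ ⟨m, hm.symm⟩ <;> nlinarith

theorem not_irrational_of_mul_eq_int_mul {t x c : ℝ} {N a m : ℤ} (ht : t ≠ 0) (hN : N ≠ 0)
    (hx : t * x = a * c) (hc : t * N = m * c) : ¬Irrational x := by
  have hm : (m : ℝ) ≠ 0 := by
    rintro hm
    rw [hm, zero_mul] at hc
    exact mul_ne_zero ht (Int.cast_ne_zero.2 hN) hc
  have hxq : x = ((a * N / m : ℚ) : ℝ) := by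
    push_cast
    rw [eq_div_iff hm]
    refine mul_left_cancel₀ ht ?_
    linear_combination (m : ℝ) * hx - a * hc
  exact fun h => h ⟨_, hxq.symm⟩

theorem Matrix.nonneg_of_mul_transpose_mulVec_eq_smul {m n : Type*} [Fintype m] [Fintype n]
    (A : Matrix m n ℝ) {x : m → ℝ} {s : ℝ} (hx : (A * Aᵀ) *ᵥ x = s • x) (hx0 : x ≠ 0) : 0 ≤ s := by
  have h := dotProduct_star_self_nonneg (Aᵀ *ᵥ x)
  rw [star_trivial, dotProduct_mulVec, vecMul_transpose, mulVec_mulVec, hx, smul_dotProduct,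
    smul_eq_mul] at h
  exact nonneg_of_mul_nonneg_left h (by simpa using dotProduct_star_self_pos_iff.2 hx0)

section IncidenceMatrix

variable {V : Type*} [Fintype V] [DecidableEq V] {G : SimpleGraph V}

theorem incMat_transpose_mulVec_mk (x : V → ℝ) {a b : V} (h : s(a, b) ∈ G.edgeSet) :
    ((incMat G)ᵀ *ᵥ x) ⟨s(a, b), h⟩ = x a + x b := by
  simp [mulVec, dotProduct, incMat, ite_mul, Finset.sum_ite, Finset.filter_or,
    Finset.filter_eq', Finset.sum_pair (G.ne_of_adj h)]

theorem incMat_transpose_mulVec_one : (incMat G)ᵀ *ᵥ (1 : V → ℝ) = 2 := by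
  ext ⟨e, he⟩
  induction e using Sym2.ind
  rw [incMat_transpose_mulVec_mk]
  norm_num

theorem incMat_mulVec_one [DecidableRel G.Adj] (v : V) :
    (incMat G *ᵥ (1 : G.edgeSet → ℝ)) v = G.degree v := by
  rw [← G.card_incidenceFinset_eq_degree, G.incidenceFinset_eq_filter,
    Finset.natCast_card_filter,
    Finset.sum_subtype (p := (· ∈ G.edgeSet)) (F := G.fintypeEdgeSet) _ (fun _ => G.mem_edgeFinset)]
  simp [mulVec, dotProduct, incMat]

theorem incMat_mul_transpose_mulVec_one [DecidableRel G.Adj] {r : ℕ}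
    (hreg : G.IsRegularOfDegree r) :
    (incMat G * (incMat G)ᵀ) *ᵥ (1 : V → ℝ) = (2 * r : ℝ) • 1 := by
  ext v
  rw [← mulVec_mulVec, incMat_transpose_mulVec_one, show (2 : G.edgeSet → ℝ) = (2 : ℝ) • 1 by
    ext; simp, mulVec_smul, Pi.smul_apply, Pi.smul_apply, incMat_mulVec_one, hreg.degree_eq]
  simp

theorem incMat_mul_transpose_apply_pos [DecidableRel G.Adj] {v w : V} (h : G.Adj v w) :
    0 < (incMat G * (incMat G)ᵀ) v w := by
  have hnonneg (x : V) (e : G.edgeSet) : 0 ≤ incMat G x e := by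
    simp only [incMat, of_apply]; split_ifs <;> norm_num
  refine Finset.sum_pos' (fun e _ => mul_nonneg (hnonneg v e) (hnonneg w e))
    ⟨⟨s(v, w), h⟩, Finset.mem_univ _, ?_⟩
  simp [incMat]

theorem incMat_mul_transpose_mulVec_single_ne_smul [DecidableRel G.Adj] {u w : V}
    (h : G.Adj u w) (μ : ℝ) :
    (incMat G * (incMat G)ᵀ) *ᵥ Pi.single u 1 ≠ μ • Pi.single u 1 := by
  intro heq
  have := congrFun heq w
  simp only [mulVec_single_one, Pi.smul_apply, Pi.single_eq_of_ne h.ne.symm, smul_zero] at this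
  exact (incMat_mul_transpose_apply_pos h.symm).ne' this

end IncidenceMatrix

section QGraph

variable {V : Type*} [Fintype V] [DecidableEq V] {G : SimpleGraph V} [DecidableRel G.Adj] {r : ℕ}

theorem QQ_isSymm (G : SimpleGraph V) (r : ℕ) : (QQ G r).IsSymm := by
  simp only [Matrix.IsSymm, QQ, fromBlocks_transpose, transpose_transpose, transpose_add,
    transpose_mul, transpose_smul, transpose_one]

theorem QQ_mulVec_sumElim (x : V → ℝ) (y : G.edgeSet → ℝ) :
    QQ G r *ᵥ Sum.elim x y = Sum.elim ((r : ℝ) • x + incMat G *ᵥ y)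
      ((incMat G)ᵀ *ᵥ x + ((2 * r - 2 : ℝ) • y + (incMat G)ᵀ *ᵥ (incMat G *ᵥ y))) := by
  simp only [QQ, fromBlocks_mulVec, Sum.elim_comp_inl, Sum.elim_comp_inr, smul_mulVec, one_mulVec,
    add_mulVec, mulVec_mulVec]

theorem QQ_mulVec_of_mulVec_eq_smul {x : V → ℝ} {q θ : ℝ}
    (hx : (incMat G * (incMat G)ᵀ) *ᵥ x = q • x) (hθ : (θ - r) * (θ - (2 * r - 2 + q)) = q) :
    QQ G r *ᵥ Sum.elim ((θ - (2 * r - 2 + q)) • x) ((incMat G)ᵀ *ᵥ x)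
      = θ • Sum.elim ((θ - (2 * r - 2 + q)) • x) ((incMat G)ᵀ *ᵥ x) := by
  have hRRt : incMat G *ᵥ ((incMat G)ᵀ *ᵥ x) = q • x := by rw [mulVec_mulVec, hx]
  rw [QQ_mulVec_sumElim, mulVec_smul, hRRt, mulVec_smul]
  ext (v | e)
  · simp only [Sum.elim_inl, Pi.add_apply, Pi.smul_apply, smul_eq_mul]
    linear_combination (-x v) * hθ
  · simp only [Sum.elim_inr, Pi.add_apply, Pi.smul_apply, smul_eq_mul]
    ring

theorem QQ_mulVec_of_transpose_mulVec_eq_zero {x : V → ℝ} (hx : (incMat G)ᵀ *ᵥ x = 0) :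
    QQ G r *ᵥ Sum.elim x 0 = (r : ℝ) • Sum.elim x 0 := by
  rw [QQ_mulVec_sumElim, hx]
  ext (v | e) <;> simp

theorem inEigenvalueSupport_QQ_of_ne_zero {x : V → ℝ} {q θ : ℝ}
    (hx : (incMat G * (incMat G)ᵀ) *ᵥ x = q • x) (hq : q ≠ 0) {u : V} (hxu : x u ≠ 0)
    (hθ : (θ - r) * (θ - (2 * r - 2 + q)) = q) :
    InEigenvalueSupport (QQ G r) (Sum.inl u) θ := by
  refine ⟨_, QQ_mulVec_of_mulVec_eq_smul hx hθ, ?_⟩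
  have : θ - (2 * r - 2 + q) ≠ 0 := right_ne_zero_of_mul (hθ ▸ hq)
  simpa using And.intro this hxu

theorem inEigenvalueSupport_QQ_of_mulVec_eq_zero {x : V → ℝ}
    (hx : (incMat G * (incMat G)ᵀ) *ᵥ x = 0) {u : V} (hxu : x u ≠ 0) :
    InEigenvalueSupport (QQ G r) (Sum.inl u) r := by
  rw [← conjTranspose_eq_transpose_of_trivial, self_mul_conjTranspose_mulVec_eq_zero,
    conjTranspose_eq_transpose_of_trivial] at hx
  exact ⟨_, QQ_mulVec_of_transpose_mulVec_eq_zero hx, hxu⟩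

theorem exists_inEigenvalueSupport_QQ_pair {x : V → ℝ} {q : ℝ}
    (hx : (incMat G * (incMat G)ᵀ) *ᵥ x = q • x) (hq : 0 < q) {u : V} (hxu : x u ≠ 0) :
    ∃ θ₁ θ₂, InEigenvalueSupport (QQ G r) (Sum.inl u) θ₁ ∧
      InEigenvalueSupport (QQ G r) (Sum.inl u) θ₂ ∧
      θ₁ + θ₂ = q + 3 * r - 2 ∧ θ₁ - θ₂ = √((q + r - 2) ^ 2 + 4 * q) := by
  have hD := Real.sq_sqrt (by positivity : 0 ≤ (q + r - 2) ^ 2 + 4 * q)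
  refine ⟨(q + 3 * r - 2 + √((q + r - 2) ^ 2 + 4 * q)) / 2,
    (q + 3 * r - 2 - √((q + r - 2) ^ 2 + 4 * q)) / 2,
    inEigenvalueSupport_QQ_of_ne_zero hx hq.ne' hxu ?_,
    inEigenvalueSupport_QQ_of_ne_zero hx hq.ne' hxu ?_, by ring, by ring⟩
  · linear_combination hD / 4
  · linear_combination hD / 4

end QGraph

theorem SimpleGraph.Connected.edge_eq_of_isRegularOfDegree_one {V : Type*} [Fintype V]
    {G : SimpleGraph V} [DecidableRel G.Adj] (hconn : G.Connected) (hreg : G.IsRegularOfDegree 1)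
    {u z : V} (huz : u ≠ z) {e : Sym2 V} (he : e ∈ G.edgeSet) : e = s(u, z) := by
  have huniq {a b c : V} (hab : G.Adj a b) (hac : G.Adj a c) : b = c :=
    Finset.card_le_one.1 (by rw [G.card_neighborFinset_eq_degree, hreg.degree_eq])
      _ ((G.mem_neighborFinset _ _).2 hab) _ ((G.mem_neighborFinset _ _).2 hac)
  obtain ⟨w, huw⟩ : ∃ w, G.Adj u w := (G.degree_pos_iff_exists_adj u).1 (by rw [hreg.degree_eq]; simp)
  have hclosed {a c : V} (p : G.Walk a c) : a = u ∨ a = w → c = u ∨ c = w := by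
    induction p with
    | nil => exact id
    | cons hac _ ih =>
      rintro (rfl | rfl)
      · exact ih (Or.inr (huniq hac huw))
      · exact ih (Or.inl (huniq hac huw.symm))
  have hall (c : V) : c = u ∨ c = w := (hconn.preconnected u c).elim fun p => hclosed p (Or.inl rfl)
  obtain rfl : z = w := (hall z).resolve_left huz.symm
  induction e using Sym2.ind with
  | _ a b =>
    have hab := G.ne_of_adj he
    rcases hall a with rfl | rfl <;> rcases hall b with rfl | rfl <;> simp_all [Sym2.eq_swap]

section PerfectStateTransfer

variable {V : Type*} [Fintype V] [DecidableEq V] {G : SimpleGraph V} [DecidableRel G.Adj]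
  {r : ℕ} {u : V} {b : V ⊕ G.edgeSet} {t : ℝ} {l : ℂ}

theorem not_isPerfectStateTransfer_QQ_one (hreg : G.IsRegularOfDegree 1) (hconn : G.Connected)
    (hb : b ≠ Sum.inl u) : ¬IsPerfectStateTransfer (QQ G 1) (Sum.inl u) b t l := by
  intro h
  have hN := QQ_isSymm G 1
  have hones := incMat_mul_transpose_mulVec_one hreg
  have h₃ := QQ_mulVec_of_mulVec_eq_smul (r := 1) (θ := 3) hones (by norm_num)
  cases b with
  | inr e =>
    have := h.abs_apply_eq hN h₃
    rw [Sum.elim_inr, incMat_transpose_mulVec_one] at this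
    norm_num at this
  | inl z =>
    have hzu : z ≠ u := fun hz => hb (hz ▸ rfl)
    have h₀ := QQ_mulVec_of_mulVec_eq_smul (r := 1) (θ := 0) hones (by norm_num)
    have hx : (incMat G)ᵀ *ᵥ (Pi.single u 1 - Pi.single z 1) = 0 := by
      ext ⟨e, he⟩
      obtain rfl := hconn.edge_eq_of_isRegularOfDegree_one hreg hzu.symm he
      rw [incMat_transpose_mulVec_mk]
      simp [hzu]
    have h₁ := QQ_mulVec_of_transpose_mulVec_eq_zero (r := 1) hx
    have e₀ := h.exp_mul_apply_eq hN h₀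
    have e₁ := h.exp_mul_apply_eq hN h₁
    have e₃ := h.exp_mul_apply_eq hN h₃
    norm_num [hzu] at e₀ e₁ e₃
    have hcube : exp (-(I * t * 3)) = exp (-(I * t)) ^ 3 := by
      rw [← exp_nat_mul]
      ring_nf
    rw [e₃, e₁, e₀] at hcube
    norm_num at hcube

theorem exists_inEigenvalueSupport_QQ_pair_int {x : V → ℝ} {k : ℤ}
    (hx : (incMat G * (incMat G)ᵀ) *ᵥ x = (k : ℝ) • x) (hk : (k : ℝ) ≠ 2 * r) (hxu : x u ≠ 0) :
    ∃ θ θ' : ℝ, ∃ n : ℤ, InEigenvalueSupport (QQ G r) (Sum.inl u) θ ∧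
      InEigenvalueSupport (QQ G r) (Sum.inl u) θ' ∧ θ + θ' = n ∧ (n : ℝ) ≠ 5 * r - 2 := by
  rcases (nonneg_of_mul_transpose_mulVec_eq_smul _ hx fun h0 => hxu (by simp [h0])).eq_or_lt
    with hk0 | hkpos
  · have h := inEigenvalueSupport_QQ_of_mulVec_eq_zero (r := r) (by rw [hx, ← hk0, zero_smul]) hxu
    refine ⟨r, r, 2 * r, h, h, by push_cast; ring, ?_⟩
    push_cast
    intro h'
    have : (3 * r : ℝ) = 2 := by linarith
    norm_cast at this
    omega
  · obtain ⟨θ, θ', h, h', hsum, -⟩ := exists_inEigenvalueSupport_QQ_pair hx hkpos hxu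
    refine ⟨θ, θ', k + 3 * r - 2, h, h', by push_cast; linarith, ?_⟩
    push_cast
    intro h'
    exact hk (by linarith)

theorem not_isPerfectStateTransfer_QQ_of_two_le (hreg : G.IsRegularOfDegree r) (hr : 2 ≤ r)
    {x : V → ℝ} {k : ℤ} (hx : (incMat G * (incMat G)ᵀ) *ᵥ x = (k : ℝ) • x) (hk : (k : ℝ) ≠ 2 * r)
    (hxu : x u ≠ 0) (hb : b ≠ Sum.inl u) : ¬IsPerfectStateTransfer (QQ G r) (Sum.inl u) b t l := by
  intro h
  have phase {θ₁ θ₂ : ℝ} := h.exists_int_mul_pi (QQ_isSymm G r) (θ₁ := θ₁) (θ₂ := θ₂)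
  have hr' : (2 : ℝ) ≤ r := by exact_mod_cast hr
  obtain ⟨θ₁, θ₁', h₁, h₁', hsum₁, hdiff₁⟩ := exists_inEigenvalueSupport_QQ_pair
    (incMat_mul_transpose_mulVec_one hreg) (by linarith) (u := u) (by simp)
  obtain ⟨θ₂, θ₂', n, h₂, h₂', hsum₂, hn⟩ := exists_inEigenvalueSupport_QQ_pair_int hx hk hxu
  obtain ⟨a, ha⟩ := phase h₁ h₁'
  obtain ⟨m₁, hm₁⟩ := phase h₁ h₂
  obtain ⟨m₂, hm₂⟩ := phase h₁' h₂'
  refine not_irrational_of_mul_eq_int_mul (N := 5 * r - 2 - n) (m := m₁ + m₂)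
    (h.time_ne_zero hb.symm) ?_ (hdiff₁ ▸ ha) ?_ ?_
  · intro h0
    apply hn
    have : ((5 * r - 2 - n : ℤ) : ℝ) = 0 := by exact_mod_cast h0
    push_cast at this
    linarith
  · push_cast
    linear_combination hm₁ + hm₂ - t * hsum₁ + t * hsum₂
  · convert irrational_sqrt_nine_mul_sq_sub hr using 2
    ring

end PerfectStateTransfer

theorem stmt13_general {V : Type*} [Fintype V] [DecidableEq V] (G : SimpleGraph V)
    [DecidableRel G.Adj] (r : ℕ) (hreg : G.IsRegularOfDegree r)
    (hconn : G.Connected) (hn : 2 ≤ Fintype.card V)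
    (d : ℕ) (q : Fin (d + 1) → ℝ) (f : Fin (d + 1) → Matrix V V ℝ)
    (hfs : ∀ i, (f i).IsSymm) (hfi : ∀ i, f i * f i = f i)
    (hfo : ∀ i j, i ≠ j → f i * f j = 0) (hfsum : ∑ i, f i = 1)
    (hQ : incMat G * (incMat G)ᵀ = ∑ i, q i • f i)
    (u : V)
    (hsupp : ∀ i, f i *ᵥ (Pi.single u 1 : V → ℝ) ≠ 0 → ∃ k : ℤ, q i = (k : ℝ)) :
    ¬ ∃ w : V ⊕ G.edgeSet, w ≠ Sum.inl u ∧ ∃ (t : ℝ) (l : ℂ), ‖l‖ = 1 ∧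
      NormedSpace.exp ((-(Complex.I * (t : ℂ))) • (QQ G r).map Complex.ofReal) *ᵥ
          (Pi.single (Sum.inl u) 1 : V ⊕ G.edgeSet → ℂ)
        = l • (Pi.single w 1 : V ⊕ G.edgeSet → ℂ) := by
  rintro ⟨w, hw, t, l, hpst⟩
  have : Nontrivial V := Fintype.one_lt_card_iff_nontrivial.1 hn
  obtain ⟨u₁, hu₁⟩ := hconn.preconnected.exists_adj_of_nontrivial u
  have hr : 1 ≤ r := hreg.degree_eq u ▸ (G.degree_pos_iff_exists_adj u).2 ⟨u₁, hu₁⟩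
  rcases hr.eq_or_lt with rfl | hr
  · exact not_isPerfectStateTransfer_QQ_one hreg hconn hw hpst
  · obtain ⟨i, hi, hqi⟩ := exists_mulVec_ne_zero_and_ne_of_mulVec_ne_smul hfsum hQ
      (incMat_mul_transpose_mulVec_single_ne_smul hu₁ (2 * r))
    obtain ⟨k, hk⟩ := hsupp i hi
    have hx := mulVec_mulVec_eq_smul_of_eq_sum_smul hfi hfo hQ i (Pi.single u 1)
    rw [hk] at hx hqi
    exact not_isPerfectStateTransfer_QQ_of_two_le hreg hr hx hqi
      (mulVec_single_apply_pos_of_isSymm_of_isIdempotentElem (hfs i) (hfi i) hi).ne' hw hpst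

theorem stmt13 {V : Type*} [Fintype V] [DecidableEq V] (G : SimpleGraph V)
    [DecidableRel G.Adj] (r : ℕ) (hreg : G.IsRegularOfDegree r)
    (hconn : G.Connected) (hn : 2 ≤ Fintype.card V)
    (d : ℕ) (q : Fin (d + 1) → ℝ) (f : Fin (d + 1) → Matrix V V ℝ)
    (hqa : StrictAnti q)
    (hfs : ∀ i, (f i).IsSymm) (hfi : ∀ i, f i * f i = f i)
    (hfo : ∀ i j, i ≠ j → f i * f j = 0) (hfsum : ∑ i, f i = 1)
    (hQ : incMat G * (incMat G)ᵀ = ∑ i, q i • f i)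
    (u : V)
    (hsupp : ∀ i, f i *ᵥ (Pi.single u 1 : V → ℝ) ≠ 0 → ∃ k : ℤ, q i = (k : ℝ)) :
    ¬ ∃ w : V ⊕ G.edgeSet, w ≠ Sum.inl u ∧ ∃ (t : ℝ) (l : ℂ), ‖l‖ = 1 ∧
      NormedSpace.exp ((-(Complex.I * (t : ℂ))) • (QQ G r).map Complex.ofReal) *ᵥ
          (Pi.single (Sum.inl u) 1 : V ⊕ G.edgeSet → ℂ)
        = l • (Pi.single w 1 : V ⊕ G.edgeSet → ℂ) :=
  stmt13_general G r hreg hconn hn d q f hfs hfi hfo hfsum hQ u hsupp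
end

section
/- For every integer d ≥ 2, let G be the d-dimensional hypercube graph: its vertex set is the set of functions Fin d → ZMod 2, with x adjacent to y if and only if x and y differ in exactly one coordinate (so G is a connected d-regular graph). Then the signless Laplacian M of the Q-graph Q(G) admits no perfect state transfer: there exist no distinct indices z, w ∈ V ⊕ E, no t ∈ ℝ, and no λ ∈ ℂ with |λ| = 1 such that exp(−i·t·M)·e_z = λ·e_w. -/
open Matrix

/-- The d-dimensional hypercube graph: two 0/1-vectors are adjacent iff they differ in
exactly one coordinate. -/
def cube (d : ℕ) : SimpleGraph (Fin d → ZMod 2) where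
  Adj x y := (Finset.univ.filter fun i => x i ≠ y i).card = 1
  symm := by
    constructor
    intro x y h
    simpa [ne_comm] using h
  loopless := by
    constructor
    intro x h
    simp at h

instance (d : ℕ) : DecidableRel (cube d).Adj :=
  fun x y => inferInstanceAs (Decidable ((Finset.univ.filter fun i => x i ≠ y i).card = 1))

/-!
Pairing `exp(-itM) e_z = λ e_w` with a real eigenvector `v` of the real symmetric matrix `M`
(eigenvalue `μ`) gives `e^{-itμ} v_z = λ v_w`; as `|λ| = 1` and `v` is real, `v_z ≠ 0` forces
`e^{-2itμ} = λ²`. Hence `t (μ - μ') ∈ πℤ` for any two eigenvalues having eigenvectors that do not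
vanish at `z`.

An eigenvector `x` of `R Rᵀ` with eigenvalue `q > 0` lifts to eigenvectors `(x, c Rᵀ x)` of the
Q-graph matrix `[[r I, R], [Rᵀ, s I + Rᵀ R]]` (here `r = d`, `s = 2d - 2`), one for each root `μ`
of `μ² - (r + s + q) μ + r (s + q) - q`. On the hypercube
take `x = 1` (`q = 2d`) and a character `x u = (-1)^{u j}` (`q = 2d - 2`), with `j` chosen so that
both lifts are nonzero at `z`. The difference `√((3d - 2)² + 8d)` of the roots for `q = 2d` and the
difference `2` of the sums of roots then both lie in `(π / t) ℤ`, and `t ≠ 0` as `z ≠ w`, so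
`√((3d - 2)² + 8d)` would be rational; but `(3d - 1)² < (3d - 2)² + 8d < (3d)²`.
-/

open Complex

section PerfectStateTransfer

variable {n : Type*} [Fintype n] [DecidableEq n]

attribute [local instance] Matrix.linftyOpNormedRing Matrix.linftyOpNormedAlgebra in
theorem Matrix.exp_mulVec_of_mulVec_eq_smul_s18 {A : Matrix n n ℂ} {v : n → ℂ} {θ : ℂ}
    (h : A *ᵥ v = θ • v) : NormedSpace.exp A *ᵥ v = cexp θ • v := by
  have hpow : ∀ k : ℕ, A ^ k *ᵥ v = θ ^ k • v := by
    intro k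
    induction k with
    | zero => simp
    | succ k ih => rw [pow_succ, ← mulVec_mulVec, h, mulVec_smul, ih, smul_smul, ← pow_succ']
  have hA := (NormedSpace.exp_series_hasSum_exp' (𝕂 := ℂ) A).mapL
    (LinearMap.toContinuousLinearMap ((mulVecBilin ℂ ℂ).flip v))
  have hθ := (NormedSpace.exp_series_hasSum_exp' (𝕂 := ℂ) θ).smul_const v
  simp only [LinearMap.coe_toContinuousLinearMap', LinearMap.flip_apply, mulVecLin_apply,
    smul_mulVec, hpow, smul_smul, smul_eq_mul] at hA hθ
  rw [← Complex.exp_eq_exp_ℂ] at hθ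
  exact hA.unique hθ

theorem pst_eigenvector_apply {N : Matrix n n ℝ} (hN : N.IsSymm) {z w : n} {t : ℝ} {l : ℂ}
    (hPST : NormedSpace.exp ((-(I * t)) • N.map ofReal) *ᵥ Pi.single z 1 = l • Pi.single w 1)
    {v : n → ℝ} {μ : ℝ} (hv : N *ᵥ v = μ • v) :
    cexp (-(I * t) * μ) * v z = l * v w := by
  set A := (-(I * t)) • N.map ofReal
  have hAv : A *ᵥ (ofReal ∘ v) = (-(I * t) * μ) • (ofReal ∘ v) := by
    have hNv : N.map ofReal *ᵥ (ofReal ∘ v) = ofReal ∘ (N *ᵥ v) :=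
      funext fun i => (ofRealHom.map_mulVec N v i).symm
    rw [smul_mulVec, hNv, hv, mul_smul]
    ext
    simp
  have hA : A.IsSymm := (hN.map _).smul _
  have key := congrArg (dotProduct (ofReal ∘ v)) hPST
  rw [dotProduct_mulVec, ← hA.exp.eq, vecMul_transpose, exp_mulVec_of_mulVec_eq_smul_s18 hAv] at key
  simpa [dotProduct_single, mul_comm] using key

theorem pst_eigenvalue_phase {N : Matrix n n ℝ} (hN : N.IsSymm) {z w : n} {t : ℝ} {l : ℂ} (hl : ‖l‖ = 1)
    (hPST : NormedSpace.exp ((-(I * t)) • N.map ofReal) *ᵥ Pi.single z 1 = l • Pi.single w 1)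
    {v : n → ℝ} {μ : ℝ} (hv : N *ᵥ v = μ • v) (hvz : v z ≠ 0) :
    cexp (-(I * t) * (2 * μ)) = l ^ 2 := by
  have h := pst_eigenvector_apply hN hPST hv
  have hsq : (v w : ℂ) ^ 2 = (v z : ℂ) ^ 2 := by
    have hu : ‖cexp (-(I * t) * μ)‖ = 1 := by simp [Complex.norm_exp]
    have := congrArg norm h
    simp only [norm_mul, hu, hl, one_mul, norm_real, Real.norm_eq_abs] at this
    exact_mod_cast (sq_eq_sq_iff_abs_eq_abs _ _).mpr this.symm
  have hexp : cexp (-(I * t) * (2 * μ)) = cexp (-(I * t) * μ) ^ 2 := by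
    rw [← Complex.exp_nat_mul]
    ring_nf
  refine mul_right_cancel₀ (pow_ne_zero 2 (ofReal_ne_zero.mpr hvz)) ?_
  rw [hexp, ← mul_pow, h, mul_pow, hsq]

theorem pst_time_ne_zero {M : Matrix n n ℂ} {z w : n} (hzw : z ≠ w) {t : ℝ} {l : ℂ}
    (hPST : NormedSpace.exp ((-(I * t)) • M) *ᵥ Pi.single z 1 = l • Pi.single w 1) : t ≠ 0 := by
  rintro rfl
  simpa [hzw] using congrFun hPST z

end PerfectStateTransfer

theorem exists_int_mul_pi_of_cexp_eq {t μ ν : ℝ}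
    (h : cexp (-(I * t) * (2 * μ)) = cexp (-(I * t) * (2 * ν))) :
    ∃ k : ℤ, t * (μ - ν) = k * Real.pi := by
  obtain ⟨n, hn⟩ := Complex.exp_eq_exp_iff_exists_int.mp h
  refine ⟨-n, ?_⟩
  have hI : (2 * (t * (μ - ν)) : ℂ) * I = (2 * (-n * Real.pi) : ℂ) * I := by
    linear_combination -hn
  exact_mod_cast mul_left_cancel₀ two_ne_zero (mul_right_cancel₀ I_ne_zero hI)

theorem Int.not_isSquare_of_sq_lt_of_lt_sq {m n : ℤ} (hm : 0 ≤ m) (h₁ : m ^ 2 < n)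
    (h₂ : n < (m + 1) ^ 2) : ¬IsSquare n := by
  rintro ⟨k, rfl⟩
  have hk : k * k = |k| ^ 2 := by rw [sq_abs, sq]
  have hlo : m < |k| := by nlinarith [abs_nonneg k]
  have hhi : |k| < m + 1 := by nlinarith [abs_nonneg k]
  omega

theorem not_irrational_of_mul_eq_int_mul_pi {t a : ℝ} {q : ℚ} {k k' : ℤ} (ht : t ≠ 0)
    (hq : q ≠ 0) (hk : t * a = k * Real.pi) (hk' : t * q = k' * Real.pi) : ¬Irrational a := by
  have hk'0 : (k' : ℝ) ≠ 0 := by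
    rintro h
    rw [h, zero_mul, mul_eq_zero] at hk'
    exact hk'.elim ht (by exact_mod_cast hq)
  have hπ : (a * k' - k * q) * Real.pi = 0 := by linear_combination (q : ℝ) * hk - a * hk'
  have ha : a * k' = k * q := by
    linarith [(mul_eq_zero.mp hπ).resolve_right Real.pi_ne_zero]
  refine fun h => h ⟨k * q / k', ?_⟩
  push_cast
  rw [← ha, mul_div_cancel_right₀ a hk'0]

section QGraph

variable {m n : Type*} [Fintype m] [Fintype n] [DecidableEq m] [DecidableEq n]
  {R : Matrix m n ℝ} {r s q μ : ℝ} {x : m → ℝ}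

theorem fromBlocks_mulVec_sumElim_eq_smul {c : ℝ} (hx : R *ᵥ (Rᵀ *ᵥ x) = q • x)
    (h₁ : r + c * q = μ) (h₂ : 1 + c * (s + q) = μ * c) :
    fromBlocks (r • 1) R Rᵀ (s • 1 + Rᵀ * R) *ᵥ Sum.elim x (c • (Rᵀ *ᵥ x))
      = μ • Sum.elim x (c • (Rᵀ *ᵥ x)) := by
  have hR : R *ᵥ (c • (Rᵀ *ᵥ x)) = (c * q) • x := by rw [mulVec_smul, hx, smul_smul]
  have hRR : (Rᵀ * R) *ᵥ (c • (Rᵀ *ᵥ x)) = (c * q) • (Rᵀ *ᵥ x) := by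
    rw [← mulVec_mulVec, hR, mulVec_smul]
  rw [fromBlocks_mulVec]
  ext (i | e)
  · simp only [Sum.elim_comp_inl, Sum.elim_comp_inr, Sum.elim_inl, Pi.smul_apply, Pi.add_apply,
      smul_mulVec, one_mulVec, hR, smul_eq_mul]
    linear_combination x i * h₁
  · simp only [Sum.elim_comp_inl, Sum.elim_comp_inr, Sum.elim_inr, Pi.smul_apply, Pi.add_apply,
      add_mulVec, smul_mulVec, one_mulVec, hRR, smul_eq_mul]
    linear_combination (Rᵀ *ᵥ x) e * h₂

theorem fromBlocks_mulVec_sumElim_of_isRoot (hx : R *ᵥ (Rᵀ *ᵥ x) = q • x) (hq : q ≠ 0)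
    (hμ : μ ^ 2 - (r + s + q) * μ + (r * (s + q) - q) = 0) :
    fromBlocks (r • 1) R Rᵀ (s • 1 + Rᵀ * R) *ᵥ Sum.elim x (((μ - r) / q) • (Rᵀ *ᵥ x))
      = μ • Sum.elim x (((μ - r) / q) • (Rᵀ *ᵥ x)) := by
  refine fromBlocks_mulVec_sumElim_eq_smul hx (by field_simp; ring) ?_
  field_simp
  linear_combination -hμ

theorem qGraph_pst_eigenvalue_phase {z w : m ⊕ n} {t : ℝ} {l : ℂ} (hl : ‖l‖ = 1)
    (hPST : NormedSpace.exp ((-(I * t)) • (fromBlocks (r • 1) R Rᵀ (s • 1 + Rᵀ * R)).map ofReal)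
      *ᵥ Pi.single z 1 = l • Pi.single w 1)
    (hx : R *ᵥ (Rᵀ *ᵥ x) = q • x) (hq : q ≠ 0)
    (hμ : μ ^ 2 - (r + s + q) * μ + (r * (s + q) - q) = 0) (hz : Sum.elim x (Rᵀ *ᵥ x) z ≠ 0) :
    cexp (-(I * t) * (2 * μ)) = l ^ 2 := by
  have hsymm : (fromBlocks (r • 1) R Rᵀ (s • 1 + Rᵀ * R)).IsSymm :=
    .fromBlocks ((isSymm_one).smul r) rfl
      (((isSymm_one).smul s).add (transpose_mul Rᵀ R))
  refine pst_eigenvalue_phase hsymm hl hPST (fromBlocks_mulVec_sumElim_of_isRoot hx hq hμ) ?_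
  have hμr : μ - r ≠ 0 := by
    rintro h
    rw [sub_eq_zero.mp h] at hμ
    exact hq (by linear_combination -hμ)
  rcases z with u | e
  · simpa using hz
  · simpa [hμr, hq] using hz

theorem qGraph_pst_constraints {z w : m ⊕ n} {t : ℝ} {l : ℂ} (hl : ‖l‖ = 1)
    (hPST : NormedSpace.exp ((-(I * t)) • (fromBlocks (r • 1) R Rᵀ (s • 1 + Rᵀ * R)).map ofReal)
      *ᵥ Pi.single z 1 = l • Pi.single w 1)
    {x x' : m → ℝ} {q q' : ℝ} (hx : R *ᵥ (Rᵀ *ᵥ x) = q • x) (hx' : R *ᵥ (Rᵀ *ᵥ x') = q' • x')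
    (hq : 0 < q) (hq' : 0 < q')
    (hz : Sum.elim x (Rᵀ *ᵥ x) z ≠ 0) (hz' : Sum.elim x' (Rᵀ *ᵥ x') z ≠ 0) :
    (∃ k : ℤ, t * √((s + q - r) ^ 2 + 4 * q) = k * Real.pi) ∧
      ∃ k : ℤ, t * (q - q') = k * Real.pi := by
  have phase : ∀ {x : m → ℝ} {q : ℝ}, R *ᵥ (Rᵀ *ᵥ x) = q • x → 0 < q →
      Sum.elim x (Rᵀ *ᵥ x) z ≠ 0 → ∀ ε : ℝ, ε ^ 2 = 1 →
      cexp (-(I * t) * (2 * (((r + s + q + ε * √((s + q - r) ^ 2 + 4 * q)) / 2 : ℝ) : ℂ))) = l ^ 2 := by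
    intro x q hx hq hz ε hε
    have hΔ := Real.sq_sqrt (by positivity : 0 ≤ (s + q - r) ^ 2 + 4 * q)
    refine qGraph_pst_eigenvalue_phase hl hPST hx hq.ne' ?_ hz
    linear_combination (ε ^ 2 / 4) * hΔ + ((s + q - r) ^ 2 / 4 + q) * hε
  obtain ⟨k₁, hk₁⟩ := exists_int_mul_pi_of_cexp_eq
    ((phase hx hq hz 1 (by norm_num)).trans (phase hx hq hz (-1) (by norm_num)).symm)
  obtain ⟨k₂, hk₂⟩ := exists_int_mul_pi_of_cexp_eq
    ((phase hx hq hz 1 (by norm_num)).trans (phase hx' hq' hz' 1 (by norm_num)).symm)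
  obtain ⟨k₃, hk₃⟩ := exists_int_mul_pi_of_cexp_eq
    ((phase hx hq hz (-1) (by norm_num)).trans (phase hx' hq' hz' (-1) (by norm_num)).symm)
  refine ⟨⟨k₁, by linear_combination hk₁⟩, ⟨k₂ + k₃, ?_⟩⟩
  -- the two roots for `q` sum to `r + s + q`
  push_cast
  linear_combination hk₂ + hk₃

end QGraph

section Incidence

variable {V : Type*} [Fintype V] [DecidableEq V] (G : SimpleGraph V)

theorem transpose_incMat_mulVec_mk {a b : V} (h : s(a, b) ∈ G.edgeSet) (x : V → ℝ) :
    ((incMat G)ᵀ *ᵥ x) ⟨s(a, b), h⟩ = x a + x b := by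
  simp [incMat, mulVec, dotProduct, Sym2.mem_iff, ite_mul, Finset.sum_ite, Finset.filter_or,
    Finset.filter_eq', (G.mem_edgeSet.mp h).ne]

theorem sumElim_one_transpose_incMat_mulVec_ne_zero (z : V ⊕ G.edgeSet) :
    Sum.elim (1 : V → ℝ) ((incMat G)ᵀ *ᵥ 1) z ≠ 0 := by
  rcases z with u | ⟨e, he⟩
  · simp
  · induction e using Sym2.ind with
    | h a b => simp [transpose_incMat_mulVec_mk G he]

variable [DecidableRel G.Adj]

theorem incMat_apply (v : V) (e : G.edgeSet) : incMat G v e = G.incMatrix ℝ v e := by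
  simp [incMat, SimpleGraph.incMatrix_apply', SimpleGraph.incidenceSet, e.2]

theorem incMat_mul_transpose : incMat G * (incMat G)ᵀ = G.degMatrix ℝ + G.adjMatrix ℝ := by
  have h : incMat G * (incMat G)ᵀ = G.incMatrix ℝ * (G.incMatrix ℝ)ᵀ := by
    ext a b
    simp only [mul_apply, transpose_apply, incMat_apply]
    rw [Finset.sum_set_coe (f := fun e => G.incMatrix ℝ a e * G.incMatrix ℝ b e)]
    refine Finset.sum_subset (Finset.subset_univ _) fun e _ he => ?_
    exact mul_eq_zero_of_left
      (G.incMatrix_of_notMem_incidenceSet fun h => he (Set.mem_toFinset.mpr h.1)) _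
  rw [h, G.incMatrix_mul_transpose]
  ext a b
  rcases eq_or_ne a b with rfl | hab <;> simp [SimpleGraph.degMatrix, *]

end Incidence

section Hypercube

variable {d : ℕ}

theorem cube_adj_iff {u v : Fin d → ZMod 2} : (cube d).Adj u v ↔ ∃ i, v = u + Pi.single i 1 := by
  change (Finset.univ.filter fun i => u i ≠ v i).card = 1 ↔ _
  rw [Finset.card_eq_one]
  refine exists_congr fun i => ?_
  rw [Finset.ext_iff, funext_iff]
  refine forall_congr' fun k => ?_
  rcases eq_or_ne k i with rfl | hki
  · simp only [Finset.mem_filter, Finset.mem_univ, true_and, Finset.mem_singleton, Pi.add_apply,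
      Pi.single_eq_same, iff_true]
    generalize u k = a, v k = b
    revert a b
    decide
  · simp [hki, eq_comm]

theorem add_single_one_injective (u : Fin d → ZMod 2) :
    Function.Injective fun i => u + Pi.single i 1 := fun i j hij => by
  by_contra hne
  simpa [hne] using congrFun (add_left_cancel hij) i

theorem cube_neighborFinset (u : Fin d → ZMod 2) :
    (cube d).neighborFinset u = Finset.univ.image fun i => u + Pi.single i 1 := by
  ext v
  simp [cube_adj_iff, eq_comm]

theorem cube_incMat_mulVec (x : (Fin d → ZMod 2) → ℝ) (u : Fin d → ZMod 2) :
    (incMat (cube d) *ᵥ ((incMat (cube d))ᵀ *ᵥ x)) u = d * x u + ∑ i, x (u + Pi.single i 1) := by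
  rw [mulVec_mulVec, incMat_mul_transpose, add_mulVec, Pi.add_apply,
    SimpleGraph.degMatrix_mulVec_apply, SimpleGraph.adjMatrix_mulVec_apply,
    ← SimpleGraph.card_neighborFinset_eq_degree, cube_neighborFinset,
    Finset.card_image_of_injective _ (add_single_one_injective u),
    Finset.sum_image fun i _ j _ h => add_single_one_injective u h]
  simp

def cubeSign (j : Fin d) (u : Fin d → ZMod 2) : ℝ := (-1) ^ (u j).val

theorem cubeSign_ne_zero (j : Fin d) (u : Fin d → ZMod 2) : cubeSign j u ≠ 0 :=
  pow_ne_zero _ (by norm_num)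

theorem cubeSign_add_single (i j : Fin d) (u : Fin d → ZMod 2) :
    cubeSign j (u + Pi.single i 1) = cubeSign j u - if i = j then 2 * cubeSign j u else 0 := by
  rcases eq_or_ne i j with rfl | hij
  · have h : ∀ a : ZMod 2, ((-1 : ℝ) ^ (a + 1).val) = -(-1) ^ a.val := by
      intro a; fin_cases a <;> simp +decide
    simp [cubeSign, h]
    ring
  · simp [cubeSign, hij, hij.symm]

theorem cube_incMat_mulVec_cubeSign (j : Fin d) :
    incMat (cube d) *ᵥ ((incMat (cube d))ᵀ *ᵥ cubeSign j) = (2 * d - 2 : ℝ) • cubeSign j := by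
  ext u
  simp [cube_incMat_mulVec, cubeSign_add_single, Finset.sum_sub_distrib]
  ring

theorem cube_incMat_mulVec_one :
    incMat (cube d) *ᵥ ((incMat (cube d))ᵀ *ᵥ 1) = (2 * d : ℝ) • 1 := by
  ext u
  simp [cube_incMat_mulVec]
  ring

theorem exists_cubeSign_sumElim_ne_zero (hd : 2 ≤ d) (z : (Fin d → ZMod 2) ⊕ (cube d).edgeSet) :
    ∃ j, Sum.elim (cubeSign j) ((incMat (cube d))ᵀ *ᵥ cubeSign j) z ≠ 0 := by
  rcases z with u | ⟨e, he⟩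
  · exact ⟨⟨0, by omega⟩, cubeSign_ne_zero _ u⟩
  · induction e using Sym2.ind with
    | h a b =>
      obtain ⟨i, rfl⟩ := cube_adj_iff.mp ((cube d).mem_edgeSet.mp he)
      have : Nontrivial (Fin d) := Fin.nontrivial_iff_two_le.mpr hd
      obtain ⟨j, hji⟩ := exists_ne i
      refine ⟨j, ?_⟩
      simp [transpose_incMat_mulVec_mk _ he, cubeSign_add_single, hji.symm, cubeSign_ne_zero]

theorem irrational_sqrt_cube_discriminant (hd : 2 ≤ d) :
    Irrational √((3 * d - 2) ^ 2 + 8 * d : ℝ) := by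
  have hcast : ((3 * d - 2) ^ 2 + 8 * d : ℝ) = ((9 * d ^ 2 - 4 * d + 4 : ℤ) : ℝ) := by
    push_cast; ring
  rw [hcast, irrational_sqrt_intCast_iff_of_nonneg (by nlinarith)]
  exact Int.not_isSquare_of_sq_lt_of_lt_sq (m := 3 * d - 1) (by omega) (by nlinarith) (by nlinarith)

end Hypercube

theorem stmt18 (d : ℕ) (hd : 2 ≤ d) :
    ¬ ∃ (z w : (Fin d → ZMod 2) ⊕ (cube d).edgeSet), z ≠ w ∧
      ∃ (t : ℝ) (l : ℂ), ‖l‖ = 1 ∧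
        NormedSpace.exp
            ((-(Complex.I * (t : ℂ))) • (QQ (cube d) d).map Complex.ofReal) *ᵥ
            (Pi.single z 1 : (Fin d → ZMod 2) ⊕ (cube d).edgeSet → ℂ)
          = l • (Pi.single w 1 : (Fin d → ZMod 2) ⊕ (cube d).edgeSet → ℂ) := by
  rintro ⟨z, w, hzw, t, l, hl, hPST⟩
  have hd' : (2 : ℝ) ≤ d := by exact_mod_cast hd
  obtain ⟨j, hj⟩ := exists_cubeSign_sumElim_ne_zero hd z
  obtain ⟨⟨k, hk⟩, ⟨k', hk'⟩⟩ := qGraph_pst_constraints hl hPST cube_incMat_mulVec_one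
    (cube_incMat_mulVec_cubeSign j) (by linarith) (by linarith)
    (sumElim_one_transpose_incMat_mulVec_ne_zero _ z) hj
  refine not_irrational_of_mul_eq_int_mul_pi (q := 2) (pst_time_ne_zero hzw hPST) two_ne_zero
    (k := k) (k' := k') ?_ ?_ (irrational_sqrt_cube_discriminant hd)
  · convert hk using 3
    ring
  · convert hk' using 2
    push_cast
    ring
end
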